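/- With W the elliptic reconstruction of w_h and σ, σ_h the continuous and discrete Lagrange multipliers, for every v ∈ V and a.e. t the identity ⟨(W−w)_t, v⟩ + a(W−w, v) + ⟨σ, v⟩ = ⟨σ_h, v⟩ + ⟨(W−w_h)_t, v⟩ holds; consequently, since σ ≥ 0, in the sense of distributions (W−w)_t − Δ(W−w) ≤ σ_h + (W−w_h)_t. -/
import Mathlib


/-- Pointwise error relation for the elliptic reconstruction.  `V` models `H¹₀(Ω)` (with
order so that nonnegative test functions and `σ ≥ 0` make sense), `a` is the Dirichlet form
and `b` the `L²(Ω)` pairing.  `w` solves the parabolic VI with continuous multiplier `σ`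
(`⟨σ,v⟩ = ⟨w_t,v⟩ + a(w,v) − (f,v)`), `wh` is the discrete solution with discrete multiplier
`σh`, and `W` is the elliptic reconstruction (`a(W(t),v) = (f + σ_h − w_{h,t}, v)` for all
`v ∈ V`).  Then for a.e. `t` and every `v ∈ V` the identity
`⟨(W−w)_t, v⟩ + a(W−w, v) + ⟨σ, v⟩ = ⟨σ_h, v⟩ + ⟨(W−w_h)_t, v⟩` holds; consequently, since
`σ ≥ 0`, in the sense of distributions (i.e. tested against every `v ≥ 0`)
`(W−w)_t − Δ(W−w) ≤ σ_h + (W−w_h)_t`. -/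
theorem elliptic_reconstruction_error_relation
    {V : Type*} [NormedAddCommGroup V] [NormedSpace ℝ V] [Lattice V]
    (T : ℝ) (hT : 0 < T)
    (a b : LinearMap.BilinForm ℝ V)
    (f w wt W Wt wh wht σ σh : ℝ → V)
    -- time derivatives
    (hw' : ∀ t ∈ Set.Ioc (0 : ℝ) T, HasDerivAt w (wt t) t)
    (hW' : ∀ t ∈ Set.Ioc (0 : ℝ) T, HasDerivAt W (Wt t) t)
    (hwh' : ∀ t ∈ Set.Ioc (0 : ℝ) T, HasDerivAt wh (wht t) t)
    -- definition of the continuous multiplier `σ`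
    (hσ : ∀ t ∈ Set.Ioc (0 : ℝ) T, ∀ v : V,
      b (σ t) v = b (wt t) v + a (w t) v - b (f t) v)
    -- definition of the elliptic reconstruction `W`
    (hW : ∀ t ∈ Set.Ioc (0 : ℝ) T, ∀ v : V,
      a (W t) v = b (f t + σh t - wht t) v)
    -- key sign property `σ ≥ 0` (Remark 2.1)
    (hσpos : ∀ t ∈ Set.Ioc (0 : ℝ) T, 0 ≤ σ t)
    -- the `L²` pairing of nonnegative elements is nonnegative
    (hbpos : ∀ x y : V, 0 ≤ x → 0 ≤ y → 0 ≤ b x y) :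
    ∀ t ∈ Set.Ioc (0 : ℝ) T,
      (∀ v : V,
        b (Wt t - wt t) v + a (W t - w t) v + b (σ t) v
          = b (σh t) v + b (Wt t - wht t) v) ∧
      (∀ v : V, 0 ≤ v →
        b (Wt t - wt t) v + a (W t - w t) v
          ≤ b (σh t) v + b (Wt t - wht t) v) := by
  intro t ht
  have key : ∀ v : V,
      b (Wt t - wt t) v + a (W t - w t) v + b (σ t) v
        = b (σh t) v + b (Wt t - wht t) v := by
    intro v
    have h1 := hσ t ht v
    have h2 := hW t ht v
    simp only [map_sub, LinearMap.sub_apply, map_add, LinearMap.add_apply] at *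
    linarith
  refine ⟨key, fun v hv => ?_⟩
  have := key v
  have hpos := hbpos (σ t) v (hσpos t ht) hv
  linarith
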